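/- Suppose g, h : ℝⁿ × ℝⁿ → ℝ satisfy |g(x,y)| ≤ c₁ e^{-‖x-y‖²/c₁} for a constant c₁ > 0 and that Γ is a group of isometries of ℝⁿ such that |{γ ∈ Γ : ‖x - γy‖ ≤ r}| ≤ c₂ e^{c₂ r} for all r > 0. Then the series ∑_{γ ∈ Γ} g(x, γ y) converges absolutely, with sum bounded by a constant depending only on c₁, c₂. -/

import Mathlib

/-!
Split the orbit `Γ • y` into the shells `k ≤ ‖x - γ • y‖ < k + 1`. On the `k`-th shell each term is
at most `c₁ exp (-k² / c₁)`, and the shell lies in the ball of radius `k + 1`, so it has at most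
`c₂ exp (c₂ (k + 1))` points. The Gaussian beats the exponential growth, so the shell bounds form a
summable series whose sum bounds every partial sum of the kernel series, uniformly in `x, y`.
-/

open Metric

open Finset in
theorem Finset.sum_le_tsum_of_shell_bound {ι : Type*} {f : ι → ℝ} {K : ι → ℕ} {b N : ℕ → ℝ}
    (hfb : ∀ i, f i ≤ b (K i)) (hb : 0 ≤ b)
    (hN : ∀ k, {i | K i = k}.Finite ∧ ({i | K i = k}.ncard : ℝ) ≤ N k)
    (hsum : Summable fun k => N k * b k) (s : Finset ι) :
    ∑ i ∈ s, f i ≤ ∑' k, N k * b k := by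
  classical
  have hN0 : ∀ k, 0 ≤ N k := fun k => (Nat.cast_nonneg _).trans (hN k).2
  have hshell : ∀ k, ∑ i ∈ s with K i = k, f i ≤ N k * b k := fun k =>
    calc ∑ i ∈ s with K i = k, f i
        ≤ #{i ∈ s | K i = k} • b k :=
          sum_le_card_nsmul _ _ _ fun i hi => (mem_filter.1 hi).2 ▸ hfb i
      _ ≤ N k * b k := by
        rw [nsmul_eq_mul]
        gcongr
        · exact hb k
        calc (#{i ∈ s | K i = k} : ℝ) = (({i ∈ s | K i = k} : Finset ι) : Set ι).ncard := by
              rw [Set.ncard_coe_finset]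
          _ ≤ {i | K i = k}.ncard := by
              gcongr
              · exact (hN k).1
              · intro i hi; exact (mem_filter.1 hi).2
          _ ≤ N k := (hN k).2
  calc ∑ i ∈ s, f i = ∑ k ∈ s.image K, ∑ i ∈ s with K i = k, f i :=
        (sum_fiberwise_of_maps_to (fun i hi => mem_image_of_mem K hi) f).symm
    _ ≤ ∑ k ∈ s.image K, N k * b k := sum_le_sum fun k _ => hshell k
    _ ≤ ∑' k, N k * b k := hsum.sum_le_tsum _ fun k _ => mul_nonneg (hN0 k) (hb k)

theorem summable_and_tsum_le_of_shell_bound {ι : Type*} {f : ι → ℝ} (hf : 0 ≤ f) {K : ι → ℕ}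
    {b N : ℕ → ℝ} (hfb : ∀ i, f i ≤ b (K i)) (hb : 0 ≤ b)
    (hN : ∀ k, {i | K i = k}.Finite ∧ ({i | K i = k}.ncard : ℝ) ≤ N k)
    (hsum : Summable fun k => N k * b k) :
    Summable f ∧ ∑' i, f i ≤ ∑' k, N k * b k := by
  have hpartial := Finset.sum_le_tsum_of_shell_bound hfb hb hN hsum
  have hf_summable := summable_of_sum_le hf hpartial
  exact ⟨hf_summable, hf_summable.tsum_le_of_sum_le hpartial⟩

theorem Real.summable_exp_mul_sub_sq_div {c : ℝ} (hc : 0 < c) (a : ℝ) :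
    Summable fun k : ℕ => Real.exp (a * k - k ^ 2 / c) := by
  refine Summable.of_norm_bounded_eventually_nat Real.summable_exp_neg_nat ?_
  filter_upwards [tendsto_natCast_atTop_atTop.eventually_ge_atTop (c * (a + 1))] with k hk
  have hquad : (a + 1) * k ≤ k ^ 2 / c := by
    rw [le_div_iff₀ hc]
    nlinarith [(Nat.cast_nonneg k : (0 : ℝ) ≤ k)]
  rw [Real.norm_eq_abs, Real.abs_exp, Real.exp_le_exp]
  linarith

theorem summable_kernel_over_group_general
    (n : ℕ) (g : EuclideanSpace ℝ (Fin n) × EuclideanSpace ℝ (Fin n) → ℝ)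
    {Γ : Type*} [Group Γ] [MulAction Γ (EuclideanSpace ℝ (Fin n))]
    (c₁ c₂ : ℝ) (hc₁ : 0 < c₁)
    (hg : ∀ x y : EuclideanSpace ℝ (Fin n), |g (x, y)| ≤ c₁ * Real.exp (-‖x - y‖ ^ 2 / c₁))
    (hcount : ∀ (x y : EuclideanSpace ℝ (Fin n)) (r : ℝ), 0 < r →
      {γ : Γ | ‖x - γ • y‖ ≤ r}.Finite ∧
        (Nat.card {γ : Γ | ‖x - γ • y‖ ≤ r} : ℝ) ≤ c₂ * Real.exp (c₂ * r)) :
    ∃ C : ℝ, ∀ x y : EuclideanSpace ℝ (Fin n),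
      Summable (fun γ : Γ => |g (x, γ • y)|) ∧ ∑' γ : Γ, |g (x, γ • y)| ≤ C := by
  set b : ℕ → ℝ := fun k => c₁ * Real.exp (-(k : ℝ) ^ 2 / c₁)
  set N : ℕ → ℝ := fun k => c₂ * Real.exp (c₂ * (k + 1))
  have hsum : Summable fun k => N k * b k := by
    refine ((Real.summable_exp_mul_sub_sq_div hc₁ c₂).mul_left (c₂ * c₁ * Real.exp c₂)).congr
      fun k => ?_
    simp only [N, b, sub_eq_add_neg, neg_div, mul_add, mul_one, Real.exp_add]
    ring
  refine ⟨∑' k, N k * b k, fun x y => summable_and_tsum_le_of_shell_bound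
    (fun γ => abs_nonneg _) (K := fun γ => ⌊‖x - γ • y‖⌋₊) (fun γ => ?_) (fun k => by positivity)
    (fun k => ?_) hsum⟩
  · refine (hg x (γ • y)).trans ?_
    show _ ≤ c₁ * Real.exp (-(⌊‖x - γ • y‖⌋₊ : ℝ) ^ 2 / c₁)
    gcongr
    exact Nat.floor_le (norm_nonneg _)
  · obtain ⟨hfin, hcard⟩ := hcount x y (k + 1) (by positivity)
    have hshell : {γ : Γ | ⌊‖x - γ • y‖⌋₊ = k} ⊆ {γ : Γ | ‖x - γ • y‖ ≤ k + 1} := by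
      rintro γ rfl
      exact (Nat.lt_floor_add_one ‖x - γ • y‖).le
    refine ⟨hfin.subset hshell, ?_⟩
    calc ({γ : Γ | ⌊‖x - γ • y‖⌋₊ = k}.ncard : ℝ) ≤ {γ : Γ | ‖x - γ • y‖ ≤ k + 1}.ncard := by
          exact_mod_cast Set.ncard_le_ncard hshell hfin
      _ ≤ N k := by rwa [← Nat.card_coe_set_eq]

/-- Gaussian decay of a kernel plus exponential growth of orbit-point counts give absolute
convergence of the Poincaré-type series `∑_γ g (x, γ • y)`, with a bound depending only on
the constants `c₁, c₂`. -/
theorem summable_kernel_over_group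
    (n : ℕ) (g h : EuclideanSpace ℝ (Fin n) × EuclideanSpace ℝ (Fin n) → ℝ)
    {Γ : Type*} [Group Γ] [MulAction Γ (EuclideanSpace ℝ (Fin n))]
    (hiso : ∀ (γ : Γ) (a b : EuclideanSpace ℝ (Fin n)), dist (γ • a) (γ • b) = dist a b)
    (c₁ c₂ : ℝ) (hc₁ : 0 < c₁) (hc₂ : 0 < c₂)
    (hg : ∀ x y : EuclideanSpace ℝ (Fin n), |g (x, y)| ≤ c₁ * Real.exp (-‖x - y‖ ^ 2 / c₁))
    (hcount : ∀ (x y : EuclideanSpace ℝ (Fin n)) (r : ℝ), 0 < r →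
      {γ : Γ | ‖x - γ • y‖ ≤ r}.Finite ∧
        (Nat.card {γ : Γ | ‖x - γ • y‖ ≤ r} : ℝ) ≤ c₂ * Real.exp (c₂ * r)) :
    ∃ C : ℝ, ∀ x y : EuclideanSpace ℝ (Fin n),
      Summable (fun γ : Γ => |g (x, γ • y)|) ∧ ∑' γ : Γ, |g (x, γ • y)| ≤ C :=
  summable_kernel_over_group_general n g c₁ c₂ hc₁ hg hcount
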